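/- arXiv:2109.11472 — 5 statements merged into one kernel-verified Lean document; each statement's English description precedes it below -/
import Mathlib

section
/- Let d ≥ 1 and α ∈ (d, ∞), and consider discrete long-range percolation on ℤ^d with connection function g(z) = 1 − exp(−‖z‖₁^{−α}). Then there exist constants 0 < κ₁, κ₁' < ∞ such that, with c_n = n^{d/(α−d)}, for every r ∈ (0, ∞): limsup_{n→∞} P(e_n* ≤ c_n r) ≤ exp(−κ₁ r^{d−α}) and liminf_{n→∞} P(e_n* ≤ c_n r) ≥ exp(−κ₁' r^{d−α}). -/
open MeasureTheory ProbabilityTheory Filter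
open scoped ENNReal

noncomputable section

namespace LRP

/-- The 1-norm distance between two points of `ℤ^d`, as a real number. -/
def dist1 {d : ℕ} (x y : Fin d → ℤ) : ℝ := ∑ i, |(x i : ℝ) - (y i : ℝ)|

/-- The observation window `B_n = [-n, n]^d ∩ ℤ^d`. -/
def window (d n : ℕ) : Finset (Fin d → ℤ) :=
  Finset.Icc (fun _ => -(n : ℤ)) fun _ => (n : ℤ)

open scoped Classical in
/-- The number of exceedances `W(n)` at level `rn`: the number of points `x` of the window
which are an endpoint of an edge of length `> rn`. -/
def numExceed {d : ℕ} {Ω : Type*} (Edge : Sym2 (Fin d → ℤ) → Set Ω) (n : ℕ) (rn : ℝ)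
    (ω : Ω) : ℕ :=
  ((window d n).filter fun x => ∃ y, ω ∈ Edge s(x, y) ∧ rn < dist1 x y).card

/-- The length `e_n^*` of the longest edge with at least one endpoint in the window. -/
def maxEdge {d : ℕ} {Ω : Type*} (Edge : Sym2 (Fin d → ℤ) → Set Ω) (n : ℕ) (ω : Ω) : ℝ≥0∞ :=
  ⨆ x ∈ window d n, ⨆ y : Fin d → ℤ,
    (Edge s(x, y)).indicator (fun _ => ENNReal.ofReal (dist1 x y)) ω

/-- The `ℕ`-valued random variables `W n` converge in distribution to a Poisson random
variable with parameter `μ`. -/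
def TendstoPoisson {Ω : Type*} [MeasurableSpace Ω] (P : Measure Ω) (W : ℕ → Ω → ℕ)
    (μ : ℝ) : Prop :=
  ∀ k : ℕ, Tendsto (fun n => (P {ω | W n ω = k}).toReal) atTop
    (nhds (Real.exp (-μ) * μ ^ k / (Nat.factorial k)))

end LRP

/-! The event `e_n^* ≤ R` says that none of the independent edges `{x, y}` with `x ∈ B_n` and
`‖x - y‖₁ > R` is present, and `{x, y}` is absent with probability `exp (-‖x - y‖₁ ^ (-α))`.
Hence `P(e_n^* ≤ R)` is the infimum of `exp (-Σ_F ‖x - y‖₁ ^ (-α))` over finite families `F` of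
such pairs. This weight is comparable to `|B_n| R ^ (d - α)`: from below through the pairs
`{x, x + z}` with `z ∈ [⌈R⌉ + 1, 2⌈R⌉]^d`, from above by summing over dyadic shells of `‖z‖₁ > R`.
Finally `n ^ d R ^ (d - α) = r ^ (d - α)` for `R = n ^ (d / (α - d)) r`. -/

section IndependentEvents

variable {Ω ι : Type*} [MeasurableSpace Ω] {P : Measure Ω} {E : ι → Set Ω} {w : ι → ℝ}

theorem ProbabilityTheory.iIndepSet.measure_biInter_compl (h : iIndepSet E P) (F : Finset ι) :
    P (⋂ i ∈ F, (E i)ᶜ) = ∏ i ∈ F, P (E i)ᶜ :=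
  iIndep.meas_biInter h fun i _ =>
    (MeasurableSpace.measurableSet_generateFrom (Set.mem_singleton (E i))).compl

theorem measure_biInter_compl_eq_exp_neg_sum (h : iIndepSet E P)
    (hw : ∀ i, P (E i)ᶜ = ENNReal.ofReal (Real.exp (-w i))) (F : Finset ι) :
    P (⋂ i ∈ F, (E i)ᶜ) = ENNReal.ofReal (Real.exp (-∑ i ∈ F, w i)) := by
  rw [h.measure_biInter_compl, ← Finset.sum_neg_distrib, Real.exp_sum,
    ENNReal.ofReal_prod_of_nonneg fun i _ => (Real.exp_pos _).le]
  exact Finset.prod_congr rfl fun i _ => hw i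

theorem measure_iInter_compl_le_exp_neg_sum (h : iIndepSet E P)
    (hw : ∀ i, P (E i)ᶜ = ENNReal.ofReal (Real.exp (-w i))) (F : Finset ι) :
    P (⋂ i, (E i)ᶜ) ≤ ENNReal.ofReal (Real.exp (-∑ i ∈ F, w i)) :=
  measure_biInter_compl_eq_exp_neg_sum h hw F ▸
    measure_mono (Set.iInter_subset_iInter₂ (· ∈ F) fun i => (E i)ᶜ)

theorem ofReal_exp_neg_le_measure_iInter_compl [Countable ι] [IsFiniteMeasure P]
    (h : iIndepSet E P) (hE : ∀ i, MeasurableSet (E i))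
    (hw : ∀ i, P (E i)ᶜ = ENNReal.ofReal (Real.exp (-w i))) {B : ℝ}
    (hB : ∀ F : Finset ι, ∑ i ∈ F, w i ≤ B) :
    ENNReal.ofReal (Real.exp (-B)) ≤ P (⋂ i, (E i)ᶜ) := by
  have hmono : Antitone fun F : Finset ι => ⋂ i ∈ F, (E i)ᶜ :=
    fun F G hFG => Set.biInter_mono hFG fun _ _ => le_rfl
  rw [Set.iInter_eq_iInter_finset, hmono.measure_iInter
    (fun F => .biInter F.countable_toSet fun i _ => (hE i).compl.nullMeasurableSet)
    ⟨∅, measure_ne_top P _⟩]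
  refine le_iInf fun F => ?_
  rw [measure_biInter_compl_eq_exp_neg_sum h hw]
  exact ENNReal.ofReal_le_ofReal (Real.exp_le_exp.2 (neg_le_neg (hB F)))

end IndependentEvents

theorem Nat.pow_log_div_mul_le_and_le_two_mul {a M : ℕ} (hM : 0 < M) (haM : M ≤ a) :
    2 ^ Nat.log 2 (a / M) * M ≤ a ∧ a ≤ 2 * (2 ^ Nat.log 2 (a / M) * M) := by
  have hq : a / M ≠ 0 := (Nat.div_pos haM hM).ne'
  have hlow := Nat.pow_log_le_self 2 hq
  have hup := Nat.lt_pow_succ_log_self (b := 2) (by norm_num) (a / M)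
  have hdiv := Nat.lt_div_mul_add (a := a) hM
  constructor
  · exact (Nat.mul_le_mul_right M hlow).trans (Nat.div_mul_le_self a M)
  · rw [pow_succ] at hup
    nlinarith

namespace LRP

variable {d : ℕ} {α : ℝ}

def normL1 (z : Fin d → ℤ) : ℕ := ∑ i, (z i).natAbs

theorem dist1_eq_normL1_sub (x y : Fin d → ℤ) : dist1 x y = normL1 (x - y) := by
  simp only [dist1, normL1, Nat.cast_sum, Nat.cast_natAbs, Pi.sub_apply, Int.cast_abs,
    Int.cast_sub]

theorem dist1_comm (x y : Fin d → ℤ) : dist1 x y = dist1 y x :=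
  Finset.sum_congr rfl fun _ _ => abs_sub_comm _ _

theorem dist1_self (x : Fin d → ℤ) : dist1 x x = 0 := by
  simp [dist1]

theorem dist1_add_right (x z : Fin d → ℤ) : dist1 x (x + z) = normL1 z := by
  rw [dist1_comm, dist1_eq_normL1_sub, add_sub_cancel_left]

theorem natAbs_le_normL1 (z : Fin d → ℤ) (i : Fin d) : (z i).natAbs ≤ normL1 z :=
  Finset.single_le_sum (f := fun j => (z j).natAbs) (fun _ _ => Nat.zero_le _)
    (Finset.mem_univ i)

theorem card_window (d n : ℕ) : (window d n).card = (2 * n + 1) ^ d := by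
  rw [window, Pi.card_Icc, Finset.prod_const, Finset.card_univ, Fintype.card_fin, Int.card_Icc]
  congr 1
  omega

theorem mem_window_of_normL1_le {n : ℕ} {z : Fin d → ℤ} (hz : normL1 z ≤ n) :
    z ∈ window d n := by
  simp only [window, Finset.mem_Icc, Pi.le_def]
  have := fun i => (natAbs_le_normL1 z i).trans hz
  constructor <;> intro i <;> specialize this i <;> omega

theorem pow_le_card_window (d n : ℕ) : (n : ℝ) ^ d ≤ (window d n).card := by
  rw [card_window]
  push_cast
  gcongr
  linarith

theorem card_window_le (d : ℕ) {n : ℕ} (hn : 1 ≤ n) :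
    ((window d n).card : ℝ) ≤ 3 ^ d * (n : ℝ) ^ d := by
  rw [card_window, ← mul_pow]
  push_cast
  gcongr
  have : (1 : ℝ) ≤ n := by exact_mod_cast hn
  linarith

theorem sum_rpow_neg_normL1_le_of_shell (hα : 0 ≤ α) {N : ℕ} (hN : 1 ≤ N)
    {S : Finset (Fin d → ℤ)} (hS : ∀ z ∈ S, N ≤ normL1 z ∧ normL1 z ≤ 2 * N) :
    ∑ z ∈ S, (normL1 z : ℝ) ^ (-α) ≤ 5 ^ d * (N : ℝ) ^ ((d : ℝ) - α) := by
  have hN' : (1 : ℝ) ≤ N := by exact_mod_cast hN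
  have hcard : (S.card : ℝ) ≤ (5 * N : ℝ) ^ d := by
    have h := Finset.card_le_card fun z hz => mem_window_of_normL1_le (hS z hz).2
    rw [card_window] at h
    calc (S.card : ℝ) ≤ ((2 * (2 * N) + 1) ^ d : ℕ) := by exact_mod_cast h
      _ ≤ (5 * N : ℝ) ^ d := by push_cast; gcongr; linarith
  have hterm : ∀ z ∈ S, (normL1 z : ℝ) ^ (-α) ≤ (N : ℝ) ^ (-α) := fun z hz =>
    Real.rpow_le_rpow_of_nonpos (by positivity) (by exact_mod_cast (hS z hz).1) (by linarith)
  calc ∑ z ∈ S, (normL1 z : ℝ) ^ (-α) ≤ S.card * (N : ℝ) ^ (-α) := by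
        simpa using Finset.sum_le_card_nsmul S _ _ hterm
    _ ≤ (5 * N : ℝ) ^ d * (N : ℝ) ^ (-α) := by gcongr
    _ = 5 ^ d * (N : ℝ) ^ ((d : ℝ) - α) := by
        rw [mul_pow, mul_assoc, ← Real.rpow_natCast (N : ℝ) d, ← Real.rpow_add (by positivity),
          sub_eq_add_neg]

def tailConst (d : ℕ) (α : ℝ) : ℝ := 5 ^ d * (1 - 2 ^ ((d : ℝ) - α))⁻¹

theorem two_rpow_sub_lt_one (hα : (d : ℝ) < α) : (2 : ℝ) ^ ((d : ℝ) - α) < 1 :=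
  Real.rpow_lt_one_of_one_lt_of_neg one_lt_two (by linarith)

theorem tailConst_pos (hα : (d : ℝ) < α) : 0 < tailConst d α :=
  mul_pos (by positivity) (inv_pos.2 (sub_pos.2 (two_rpow_sub_lt_one hα)))

/-- Dyadic decomposition `2 ^ j * M ≤ ‖z‖₁ ≤ 2 ^ (j + 1) * M` with `M = ⌈R⌉`: the shells
contribute a geometric series of ratio `2 ^ (d - α) < 1`. -/
theorem sum_rpow_neg_normL1_le (hα : (d : ℝ) < α) {R : ℝ} (hR : 1 ≤ R)
    {S : Finset (Fin d → ℤ)} (hS : ∀ z ∈ S, R < normL1 z) :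
    ∑ z ∈ S, (normL1 z : ℝ) ^ (-α) ≤ tailConst d α * R ^ ((d : ℝ) - α) := by
  have hα0 : 0 ≤ α := (Nat.cast_nonneg d).trans hα.le
  set M := ⌈R⌉₊
  have hM : 1 ≤ M := Nat.one_le_ceil_iff.2 (by linarith)
  have hMS : ∀ z ∈ S, M ≤ normL1 z := fun z hz => Nat.ceil_le.2 (hS z hz).le
  set q : ℝ := 2 ^ ((d : ℝ) - α)
  have hq0 : 0 ≤ q := by positivity
  have hq1 : q < 1 := two_rpow_sub_lt_one hα
  set j : (Fin d → ℤ) → ℕ := fun z => Nat.log 2 (normL1 z / M)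
  have hshell : ∀ k ∈ S.image j,
      ∑ z ∈ S with j z = k, (normL1 z : ℝ) ^ (-α) ≤ 5 ^ d * (M : ℝ) ^ ((d : ℝ) - α) * q ^ k := by
    intro k _
    have h := sum_rpow_neg_normL1_le_of_shell hα0 (N := 2 ^ k * M) (S := S.filter (j · = k))
      (Nat.one_le_iff_ne_zero.2 (by positivity)) fun z hz => by
        rw [Finset.mem_filter] at hz
        exact hz.2 ▸ Nat.pow_log_div_mul_le_and_le_two_mul hM (hMS z hz.1)
    have hscale : (((2 ^ k * M : ℕ) : ℝ)) ^ ((d : ℝ) - α) = q ^ k * (M : ℝ) ^ ((d : ℝ) - α) := by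
      rw [Nat.cast_mul, Nat.cast_pow, Nat.cast_ofNat, Real.mul_rpow (by positivity) (by positivity),
        ← Real.rpow_natCast 2 k, ← Real.rpow_mul zero_le_two, mul_comm (k : ℝ),
        Real.rpow_mul zero_le_two, Real.rpow_natCast]
    rwa [hscale, mul_comm (q ^ k), ← mul_assoc] at h
  calc ∑ z ∈ S, (normL1 z : ℝ) ^ (-α)
      = ∑ k ∈ S.image j, ∑ z ∈ S with j z = k, (normL1 z : ℝ) ^ (-α) :=
        (Finset.sum_fiberwise_of_maps_to (fun z hz => Finset.mem_image_of_mem j hz) _).symm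
    _ ≤ ∑ k ∈ S.image j, 5 ^ d * (M : ℝ) ^ ((d : ℝ) - α) * q ^ k := Finset.sum_le_sum hshell
    _ ≤ 5 ^ d * (M : ℝ) ^ ((d : ℝ) - α) * (1 - q)⁻¹ := by
        rw [← Finset.mul_sum, ← tsum_geometric_of_lt_one hq0 hq1]
        gcongr
        exact (summable_geometric_of_lt_one hq0 hq1).sum_le_tsum _ fun k _ => pow_nonneg hq0 k
    _ ≤ tailConst d α * R ^ ((d : ℝ) - α) := by
        rw [tailConst, mul_right_comm]
        exact mul_le_mul_of_nonneg_left
          (Real.rpow_le_rpow_of_nonpos (by positivity) (Nat.le_ceil R) (sub_nonpos.2 hα.le))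
          (mul_nonneg (by positivity) (inv_nonneg.2 (sub_pos.2 hq1).le))

theorem sum_dist1_rpow_neg_le (hα : (d : ℝ) < α) {R : ℝ} (hR : 1 ≤ R) (x : Fin d → ℤ)
    {S : Finset (Fin d → ℤ)} (hS : ∀ y ∈ S, R < dist1 x y) :
    ∑ y ∈ S, dist1 x y ^ (-α) ≤ tailConst d α * R ^ ((d : ℝ) - α) := by
  simp only [dist1_eq_normL1_sub] at hS ⊢
  rw [← Finset.sum_image (f := fun z => (normL1 z : ℝ) ^ (-α))
    fun _ _ _ _ h => sub_right_injective h]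
  exact sum_rpow_neg_normL1_le hα hR fun z hz => by
    obtain ⟨y, hy, rfl⟩ := Finset.mem_image.1 hz
    exact hS y hy

def edgeWeight (α : ℝ) : Sym2 (Fin d → ℤ) → ℝ :=
  Sym2.lift ⟨fun x y => dist1 x y ^ (-α), fun x y => congrArg (· ^ (-α)) (dist1_comm x y)⟩

@[simp]
theorem edgeWeight_mk (x y : Fin d → ℤ) : edgeWeight α s(x, y) = dist1 x y ^ (-α) := rfl

theorem edgeWeight_nonneg (p : Sym2 (Fin d → ℤ)) : 0 ≤ edgeWeight α p := by
  induction p using Sym2.ind with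
  | _ x y => exact Real.rpow_nonneg (by rw [dist1_eq_normL1_sub]; positivity) _

def longPairs (d n : ℕ) (R : ℝ) : Set (Sym2 (Fin d → ℤ)) :=
  (fun q : (Fin d → ℤ) × (Fin d → ℤ) => s(q.1, q.2)) ''
    {q | q.1 ∈ window d n ∧ R < dist1 q.1 q.2}

theorem not_isDiag_of_mem_longPairs {n : ℕ} {R : ℝ} (hR : 0 ≤ R) {p : Sym2 (Fin d → ℤ)}
    (hp : p ∈ longPairs d n R) : ¬ p.IsDiag := by
  obtain ⟨⟨x, y⟩, ⟨-, hxy⟩, rfl⟩ := hp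
  rintro (rfl : x = y)
  rw [dist1_self] at hxy
  linarith

theorem sum_edgeWeight_le (hα : (d : ℝ) < α) {n : ℕ} {R : ℝ} (hR : 1 ≤ R)
    {F : Finset (Sym2 (Fin d → ℤ))} (hF : ↑F ⊆ longPairs d n R) :
    ∑ p ∈ F, edgeWeight α p ≤ (window d n).card * (tailConst d α * R ^ ((d : ℝ) - α)) := by
  classical
  rw [longPairs] at hF
  obtain ⟨G, hG, rfl⟩ := Finset.subset_set_image_iff.1 hF
  set H := (window d n ×ˢ G.image Prod.snd).filter fun q => R < dist1 q.1 q.2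
  have hGH : G ⊆ H := fun q hq => Finset.mem_filter.2
    ⟨Finset.mem_product.2 ⟨(hG hq).1, Finset.mem_image_of_mem _ hq⟩, (hG hq).2⟩
  calc ∑ p ∈ G.image (fun q => s(q.1, q.2)), edgeWeight α p
      ≤ ∑ q ∈ G, dist1 q.1 q.2 ^ (-α) :=
        Finset.sum_image_le_of_nonneg fun p _ => edgeWeight_nonneg p
    _ ≤ ∑ q ∈ H, dist1 q.1 q.2 ^ (-α) :=
        Finset.sum_le_sum_of_subset_of_nonneg hGH fun q _ _ =>
          edgeWeight_nonneg (α := α) s(q.1, q.2)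
    _ = ∑ x ∈ window d n, ∑ y ∈ G.image Prod.snd with R < dist1 x y, dist1 x y ^ (-α) := by
        simp only [H, Finset.sum_filter, Finset.sum_product]
    _ ≤ ∑ _x ∈ window d n, tailConst d α * R ^ ((d : ℝ) - α) :=
        Finset.sum_le_sum fun x _ => sum_dist1_rpow_neg_le hα hR x fun y hy =>
          (Finset.mem_filter.1 hy).2
    _ = _ := by rw [Finset.sum_const, nsmul_eq_mul]

theorem injOn_sym2_mk_add {i : Fin d} {Z : Set (Fin d → ℤ)} (hZ : ∀ z ∈ Z, 0 < z i) :
    Set.InjOn (fun q : (Fin d → ℤ) × (Fin d → ℤ) => s(q.1, q.1 + q.2)) (Set.univ ×ˢ Z) := by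
  rintro ⟨x, z⟩ ⟨-, hz⟩ ⟨x', z'⟩ ⟨-, hz'⟩ h
  rcases Sym2.eq_iff.1 h with ⟨rfl, h2⟩ | ⟨h1, h2⟩
  · exact Prod.ext rfl (add_left_cancel h2)
  · have hzz : z + z' = 0 := by linear_combination h2 - h1
    have := congrFun hzz i
    have := hZ z hz
    have := hZ z' hz'
    simp only [Pi.add_apply, Pi.zero_apply] at *
    omega

/-- The pairs `{x, x + z}` with `x` in the window and `z` in the box `[M + 1, 2M]^d`,
`M = ⌈R⌉`: there are `#(window d n) * M ^ d` of them, all of length in `(R, 4dR]`. -/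
theorem exists_finset_subset_longPairs_le_sum (hd : 1 ≤ d) (hα : 0 ≤ α) (n : ℕ) {R : ℝ}
    (hR : 1 ≤ R) :
    ∃ F : Finset (Sym2 (Fin d → ℤ)), ↑F ⊆ longPairs d n R ∧
      (4 * d : ℝ) ^ (-α) * (window d n).card * R ^ ((d : ℝ) - α) ≤
        ∑ p ∈ F, edgeWeight α p := by
  classical
  set M := ⌈R⌉₊
  have hRM : R ≤ M := Nat.le_ceil R
  have hMR : (M : ℝ) ≤ 2 * R := by
    have := Nat.ceil_lt_add_one (zero_le_one.trans hR)
    linarith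
  set Z : Finset (Fin d → ℤ) := Finset.Icc (fun _ => (M : ℤ) + 1) (fun _ => 2 * M)
  have hZ : ∀ z ∈ Z, ∀ i, (M : ℤ) + 1 ≤ z i ∧ z i ≤ 2 * M := fun z hz i =>
    ⟨(Finset.mem_Icc.1 hz).1 i, (Finset.mem_Icc.1 hz).2 i⟩
  have hZcard : Z.card = M ^ d := by
    rw [Pi.card_Icc, Finset.prod_const, Finset.card_univ, Fintype.card_fin, Int.card_Icc]
    congr 1
    omega
  have hnorm : ∀ z ∈ Z, R < normL1 z ∧ normL1 z ≤ 2 * d * M := by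
    intro z hz
    constructor
    · have h0 := natAbs_le_normL1 z ⟨0, hd⟩
      have h1 := hZ z hz ⟨0, hd⟩
      have : M + 1 ≤ normL1 z := by omega
      calc R ≤ M := hRM
        _ < normL1 z := by exact_mod_cast this
    · calc normL1 z ≤ Finset.univ.card • (2 * M) :=
            Finset.sum_le_card_nsmul _ _ _ fun i _ => by have := hZ z hz i; omega
        _ = 2 * d * M := by simp [mul_comm, mul_left_comm]
  have hinj : Set.InjOn (fun q : (Fin d → ℤ) × (Fin d → ℤ) => s(q.1, q.1 + q.2))
      ↑(window d n ×ˢ Z) :=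
    (injOn_sym2_mk_add (i := ⟨0, hd⟩) (Z := ↑Z) fun z hz => by
      have := hZ z hz ⟨0, hd⟩; omega).mono
      (by rw [Finset.coe_product]; exact Set.prod_mono (Set.subset_univ _) le_rfl)
  refine ⟨(window d n ×ˢ Z).image fun q => s(q.1, q.1 + q.2), ?_, ?_⟩
  · intro p hp
    obtain ⟨⟨x, z⟩, hq, rfl⟩ := Finset.mem_image.1 hp
    obtain ⟨hx, hz⟩ := Finset.mem_product.1 hq
    exact ⟨(x, x + z), ⟨hx, by rw [dist1_add_right]; exact (hnorm z hz).1⟩, rfl⟩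
  have hR0 : 0 < R := zero_lt_one.trans_le hR
  have hd0 : (0 : ℝ) < d := by exact_mod_cast hd
  have hM0 : (0 : ℝ) < M := hR0.trans_le hRM
  rw [Finset.sum_image hinj]
  calc (4 * d : ℝ) ^ (-α) * (window d n).card * R ^ ((d : ℝ) - α)
      = (window d n).card * R ^ d * (4 * d * R) ^ (-α) := by
        rw [Real.mul_rpow (by positivity) hR0.le, sub_eq_add_neg, Real.rpow_add hR0,
          Real.rpow_natCast]
        ring
    _ ≤ (window d n).card * (M : ℝ) ^ d * (2 * d * M : ℝ) ^ (-α) := by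
        have hRd : R ^ d ≤ (M : ℝ) ^ d := pow_le_pow_left₀ hR0.le hRM d
        have hpow : (4 * d * R) ^ (-α) ≤ (2 * d * M : ℝ) ^ (-α) :=
          Real.rpow_le_rpow_of_nonpos (by positivity) (by nlinarith) (neg_nonpos.2 hα)
        gcongr
    _ = ∑ _q ∈ window d n ×ˢ Z, (2 * d * M : ℝ) ^ (-α) := by
        rw [Finset.sum_const, Finset.card_product, hZcard, nsmul_eq_mul]
        push_cast
        ring
    _ ≤ ∑ q ∈ window d n ×ˢ Z, edgeWeight α s(q.1, q.1 + q.2) := by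
        refine Finset.sum_le_sum fun q hq => ?_
        have hz := hnorm q.2 (Finset.mem_product.1 hq).2
        rw [edgeWeight_mk, dist1_add_right]
        exact Real.rpow_le_rpow_of_nonpos (by linarith) (by exact_mod_cast hz.2) (neg_nonpos.2 hα)

section Probability

variable {Ω : Type*} {Edge : Sym2 (Fin d → ℤ) → Set Ω}

theorem setOf_maxEdge_le_eq {n : ℕ} {R : ℝ} (hR : 0 ≤ R) :
    {ω | maxEdge Edge n ω ≤ ENNReal.ofReal R} = ⋂ p : longPairs d n R, (Edge p)ᶜ := by
  ext ω
  have hpair : ∀ x y, (Edge s(x, y)).indicator (fun _ => ENNReal.ofReal (dist1 x y)) ω ≤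
      ENNReal.ofReal R ↔ (R < dist1 x y → ω ∉ Edge s(x, y)) := by
    intro x y
    by_cases h : ω ∈ Edge s(x, y) <;> simp [h, ENNReal.ofReal_le_ofReal_iff hR]
  simp only [Set.mem_ofPred_eq, maxEdge, iSup_le_iff, hpair, Set.mem_iInter, Set.mem_compl_iff,
    Subtype.forall, longPairs, Set.forall_mem_image, Prod.forall, and_imp]
  exact ⟨fun h x y hx => h x hx y, fun h x hx y => h x y hx⟩

variable [MeasurableSpace Ω] {P : Measure Ω} [IsProbabilityMeasure P]

theorem measure_compl_edge (hMeas : ∀ p, MeasurableSet (Edge p))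
    (hMarg : ∀ x y : Fin d → ℤ, x ≠ y →
      P (Edge s(x, y)) = ENNReal.ofReal (1 - Real.exp (-(dist1 x y ^ (-α)))))
    {p : Sym2 (Fin d → ℤ)} (hp : ¬ p.IsDiag) :
    P (Edge p)ᶜ = ENNReal.ofReal (Real.exp (-edgeWeight α p)) := by
  induction p using Sym2.ind with
  | _ x y =>
    have hexp : Real.exp (-edgeWeight α s(x, y)) ≤ 1 :=
      Real.exp_le_one_iff.2 (neg_nonpos.2 (edgeWeight_nonneg _))
    rw [prob_compl_eq_one_sub (hMeas _), hMarg x y (Sym2.mk_isDiag_iff.not.1 hp),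
      ← edgeWeight_mk, ← ENNReal.ofReal_one, ← ENNReal.ofReal_sub _ (sub_nonneg.2 hexp),
      sub_sub_cancel]

theorem measure_compl_edge_longPairs (hMeas : ∀ p, MeasurableSet (Edge p))
    (hMarg : ∀ x y : Fin d → ℤ, x ≠ y →
      P (Edge s(x, y)) = ENNReal.ofReal (1 - Real.exp (-(dist1 x y ^ (-α)))))
    {n : ℕ} {R : ℝ} (hR : 0 ≤ R) (p : longPairs d n R) :
    P (Edge p)ᶜ = ENNReal.ofReal (Real.exp (-edgeWeight α (p : Sym2 (Fin d → ℤ)))) :=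
  measure_compl_edge hMeas hMarg (not_isDiag_of_mem_longPairs hR p.2)

theorem toReal_measure_maxEdge_le_le (hd : 1 ≤ d) (hα : (d : ℝ) < α)
    (hMeas : ∀ p, MeasurableSet (Edge p)) (hInd : iIndepSet Edge P)
    (hMarg : ∀ x y : Fin d → ℤ, x ≠ y →
      P (Edge s(x, y)) = ENNReal.ofReal (1 - Real.exp (-(dist1 x y ^ (-α)))))
    (n : ℕ) {R : ℝ} (hR : 1 ≤ R) :
    (P {ω | maxEdge Edge n ω ≤ ENNReal.ofReal R}).toReal ≤
      Real.exp (-((4 * d : ℝ) ^ (-α) * (window d n).card * R ^ ((d : ℝ) - α))) := by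
  classical
  obtain ⟨F, hF, hsum⟩ :=
    exists_finset_subset_longPairs_le_sum hd ((Nat.cast_nonneg d).trans hα.le) n hR
  have h := measure_iInter_compl_le_exp_neg_sum (E := fun p : longPairs d n R => Edge p)
    (hInd.precomp Subtype.val_injective)
    (measure_compl_edge_longPairs (n := n) hMeas hMarg (zero_le_one.trans hR))
    (F.subtype (· ∈ longPairs d n R))
  rw [Finset.sum_subtype_of_mem (edgeWeight α) fun p hp => hF hp,
    ← setOf_maxEdge_le_eq (zero_le_one.trans hR)] at h
  exact (ENNReal.toReal_le_of_le_ofReal (Real.exp_pos _).le h).trans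
    (Real.exp_le_exp.2 (neg_le_neg hsum))

theorem exp_le_toReal_measure_maxEdge_le (hα : (d : ℝ) < α)
    (hMeas : ∀ p, MeasurableSet (Edge p)) (hInd : iIndepSet Edge P)
    (hMarg : ∀ x y : Fin d → ℤ, x ≠ y →
      P (Edge s(x, y)) = ENNReal.ofReal (1 - Real.exp (-(dist1 x y ^ (-α)))))
    (n : ℕ) {R : ℝ} (hR : 1 ≤ R) :
    Real.exp (-((window d n).card * (tailConst d α * R ^ ((d : ℝ) - α)))) ≤
      (P {ω | maxEdge Edge n ω ≤ ENNReal.ofReal R}).toReal := by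
  have h := ofReal_exp_neg_le_measure_iInter_compl (E := fun p : longPairs d n R => Edge p)
    (B := (window d n).card * (tailConst d α * R ^ ((d : ℝ) - α)))
    (hInd.precomp Subtype.val_injective) (fun p => hMeas p)
    (measure_compl_edge_longPairs hMeas hMarg (zero_le_one.trans hR)) fun F => by
      simpa using sum_edgeWeight_le hα hR (Finset.map_subtype_subset F)
  rw [← setOf_maxEdge_le_eq (zero_le_one.trans hR)] at h
  exact (ENNReal.ofReal_le_iff_le_toReal (measure_ne_top _ _)).1 h

end Probability

theorem pow_mul_rpow_scaling {x r : ℝ} (hα : (d : ℝ) ≠ α) (hx : 0 < x) (hr : 0 ≤ r) :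
    x ^ d * (x ^ ((d : ℝ) / (α - d)) * r) ^ ((d : ℝ) - α) = r ^ ((d : ℝ) - α) := by
  have hexp : (d : ℝ) + (d : ℝ) / (α - d) * ((d : ℝ) - α) = 0 := by
    field_simp [sub_ne_zero.2 hα.symm]
    ring
  rw [Real.mul_rpow (by positivity) hr, ← Real.rpow_mul hx.le, ← mul_assoc,
    ← Real.rpow_natCast, ← Real.rpow_add hx, hexp, Real.rpow_zero, one_mul]

end LRP

open LRP

theorem discrete_LRP_frechet_bounds_general
    (d : ℕ) (hd : 1 ≤ d) (α : ℝ) (hα : (d : ℝ) < α)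
    (Ω : Type*) [MeasurableSpace Ω] (P : Measure Ω) [IsProbabilityMeasure P]
    (Edge : Sym2 (Fin d → ℤ) → Set Ω)
    (hMeas : ∀ p, MeasurableSet (Edge p))
    (hInd : iIndepSet Edge P)
    (hMarg : ∀ x y : Fin d → ℤ, x ≠ y →
      P (Edge s(x, y)) = ENNReal.ofReal (1 - Real.exp (-(dist1 x y ^ (-α))))) :
    ∃ κ₁ κ₁' : ℝ, 0 < κ₁ ∧ 0 < κ₁' ∧
      ∀ r : ℝ, 0 < r →
        limsup (fun n => (P {ω | maxEdge Edge n ω ≤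
            ENNReal.ofReal ((n : ℝ) ^ ((d : ℝ) / (α - d)) * r)}).toReal) atTop ≤
          Real.exp (-κ₁ * r ^ ((d : ℝ) - α)) ∧
        Real.exp (-κ₁' * r ^ ((d : ℝ) - α)) ≤
          liminf (fun n => (P {ω | maxEdge Edge n ω ≤
            ENNReal.ofReal ((n : ℝ) ^ ((d : ℝ) / (α - d)) * r)}).toReal) atTop := by
  have hc : 0 < (d : ℝ) / (α - d) := div_pos (by exact_mod_cast hd) (sub_pos.2 hα)
  refine ⟨(4 * d : ℝ) ^ (-α), 3 ^ d * tailConst d α, by positivity,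
    mul_pos (by positivity) (tailConst_pos hα), fun r hr => ?_⟩
  have hlarge : ∀ᶠ n : ℕ in atTop, 1 ≤ n ∧ 1 ≤ (n : ℝ) ^ ((d : ℝ) / (α - d)) * r :=
    (eventually_ge_atTop 1).and <| (((tendsto_rpow_atTop hc).comp
      tendsto_natCast_atTop_atTop).atTop_mul_const hr).eventually_ge_atTop 1
  constructor
  · refine limsup_le_of_le (isCoboundedUnder_le_of_le atTop fun _ => ENNReal.toReal_nonneg)
      (hlarge.mono fun n ⟨hn, hR⟩ => ?_)
    refine (toReal_measure_maxEdge_le_le hd hα hMeas hInd hMarg n hR).trans (Real.exp_le_exp.2 ?_)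
    rw [neg_mul, neg_le_neg_iff, ← pow_mul_rpow_scaling hα.ne (Nat.cast_pos.2 hn) hr.le, mul_assoc]
    gcongr
    exact pow_le_card_window d n
  · refine le_liminf_of_le (isCoboundedUnder_ge_of_le atTop (x := 1) fun _ => measureReal_le_one)
      (hlarge.mono fun n ⟨hn, hR⟩ => ?_)
    refine (Real.exp_le_exp.2 ?_).trans (exp_le_toReal_measure_maxEdge_le hα hMeas hInd hMarg n hR)
    rw [neg_mul, neg_le_neg_iff, ← pow_mul_rpow_scaling hα.ne (Nat.cast_pos.2 hn) hr.le]
    calc _ ≤ 3 ^ d * (n : ℝ) ^ d * (tailConst d α * _) :=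
          mul_le_mul_of_nonneg_right (card_window_le d hn)
            (mul_nonneg (tailConst_pos hα).le (by positivity))
      _ = _ := by ring

/-- **Fréchet-type bounds for undirected discrete long-range percolation on `ℤ^d`.**
For the connection function `g(z) = 1 - exp(-‖z‖₁^(-α))`, `α ∈ (d,∞)`, there exist
constants `0 < κ₁, κ₁' < ∞` such that with `c_n = n^(d/(α-d))`, for every `r > 0`,
`limsup_n P(e_n^* ≤ c_n r) ≤ exp(-κ₁ r^(d-α))` and
`liminf_n P(e_n^* ≤ c_n r) ≥ exp(-κ₁' r^(d-α))`. -/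
theorem discrete_LRP_frechet_bounds
    (d : ℕ) (hd : 1 ≤ d) (α : ℝ) (hα : (d : ℝ) < α)
    (Ω : Type*) [MeasurableSpace Ω] (P : Measure Ω) [IsProbabilityMeasure P]
    (Edge : Sym2 (Fin d → ℤ) → Set Ω)
    (hMeas : ∀ p, MeasurableSet (Edge p))
    (hDiag : ∀ x, Edge s(x, x) = ∅)
    (hInd : iIndepSet Edge P)
    (hMarg : ∀ x y : Fin d → ℤ, x ≠ y →
      P (Edge s(x, y)) = ENNReal.ofReal (1 - Real.exp (-(dist1 x y ^ (-α))))) :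
    ∃ κ₁ κ₁' : ℝ, 0 < κ₁ ∧ 0 < κ₁' ∧
      ∀ r : ℝ, 0 < r →
        limsup (fun n => (P {ω | maxEdge Edge n ω ≤
            ENNReal.ofReal ((n : ℝ) ^ ((d : ℝ) / (α - d)) * r)}).toReal) atTop ≤
          Real.exp (-κ₁ * r ^ ((d : ℝ) - α)) ∧
        Real.exp (-κ₁' * r ^ ((d : ℝ) - α)) ≤
          liminf (fun n => (P {ω | maxEdge Edge n ω ≤
            ENNReal.ofReal ((n : ℝ) ^ ((d : ℝ) / (α - d)) * r)}).toReal) atTop :=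
  discrete_LRP_frechet_bounds_general d hd α hα Ω P Edge hMeas hInd hMarg
end
end

section
/- Let d ≥ 1, α ∈ (d, ∞) and r > 0, and set c_n = n^{d/(α−d)}. Then lim_{n→∞} n^d · Σ_{k = ⌊c_n r⌋ + 1}^{∞} k^{d−α−1} = r^{d−α} / (α − d). -/
open Filter Topology

/-!
With `s = α - d` one has `n^d = c_n^s`, so `n^d T(⌊c_n r⌋ + 1) = r^(-s) x^s T(⌊x⌋ + 1)` for
`x = c_n r → ∞`, where `T(m) = ∑_{k ≥ m} k^(-s-1)`. Comparing each term with
`∫_k^{k+1} t^(-s-1) dt` and `∫_{k-1}^k t^(-s-1) dt` and telescoping gives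
`m^(-s)/s ≤ T(m) ≤ (m-1)^(-s)/s`, which squeezes `x^s T(⌊x⌋ + 1)` between
`(1 + x⁻¹)^(-s)/s` and `(1 - x⁻¹)^(-s)/s`, both tending to `1/s`.
-/

open MeasureTheory in
lemma rpow_neg_sub_rpow_neg_mem_Icc {s a b : ℝ} (hs : 0 < s) (ha : 0 < a) (hab : a ≤ b) :
    a ^ (-s) - b ^ (-s) ∈ Set.Icc (s * ((b - a) * b ^ (-s - 1))) (s * ((b - a) * a ^ (-s - 1))) := by
  have h0 : (0 : ℝ) ∉ Set.uIcc a b := by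
    rw [Set.uIcc_of_le hab]
    exact fun h => ha.not_ge h.1
  have hint : a ^ (-s) - b ^ (-s) = s * ∫ x in a..b, x ^ (-s - 1) := by
    rw [integral_rpow (Or.inr ⟨by linarith, h0⟩), sub_add_cancel]
    field_simp
    ring
  have hi : IntervalIntegrable (fun x : ℝ => x ^ (-s - 1)) volume a b :=
    intervalIntegral.intervalIntegrable_rpow (Or.inr h0)
  have hlow : (b - a) * b ^ (-s - 1) ≤ ∫ x in a..b, x ^ (-s - 1) := by
    simpa using intervalIntegral.integral_mono_on hab intervalIntegrable_const hi
      fun x hx => Real.rpow_le_rpow_of_nonpos (ha.trans_le hx.1) hx.2 (by linarith)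
  have hhigh : ∫ x in a..b, x ^ (-s - 1) ≤ (b - a) * a ^ (-s - 1) := by
    simpa using intervalIntegral.integral_mono_on hab hi intervalIntegrable_const
      fun x hx => Real.rpow_le_rpow_of_nonpos ha hx.1 (by linarith)
  rw [hint]
  exact ⟨mul_le_mul_of_nonneg_left hlow hs.le, mul_le_mul_of_nonneg_left hhigh hs.le⟩

lemma rpow_mul_mul_rpow_neg {s x y : ℝ} (hx : 0 < x) (hy : 0 ≤ y) :
    x ^ s * (x * y) ^ (-s) = y ^ (-s) := by
  rw [Real.mul_rpow hx.le hy, ← mul_assoc, ← Real.rpow_add hx, add_neg_cancel, Real.rpow_zero,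
    one_mul]

section Telescoping

variable {f g : ℕ → ℝ} {m : ℕ}

lemma Summable.ite_le (hf : Summable f) (m : ℕ) :
    Summable fun k => if m ≤ k then f k else 0 :=
  (hf.indicator {k | m ≤ k}).congr fun k => by simp [Set.indicator_apply]

lemma hasSum_ite_le_sub_succ (hg : ∀ k, m ≤ k → g (k + 1) ≤ g k)
    (h0 : Tendsto g atTop (𝓝 0)) :
    HasSum (fun k => if m ≤ k then g k - g (k + 1) else 0) (g m) := by
  have hnonneg : ∀ k, 0 ≤ if m ≤ k then g k - g (k + 1) else 0 := fun k => by
    split_ifs with hk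
    exacts [sub_nonneg.2 (hg k hk), le_rfl]
  have hpartial : ∀ n, m ≤ n →
      ∑ k ∈ Finset.range n, (if m ≤ k then g k - g (k + 1) else 0) = g m - g n := by
    intro n hn
    induction n, hn using Nat.le_induction with
    | base =>
      rw [sub_self]
      exact Finset.sum_eq_zero fun k hk => if_neg (not_le.2 (Finset.mem_range.1 hk))
    | succ n hmn ih =>
      rw [Finset.sum_range_succ, ih, if_pos hmn]
      ring
  rw [hasSum_iff_tendsto_nat_of_nonneg hnonneg]
  have hlim : Tendsto (fun n => g m - g n) atTop (𝓝 (g m)) := by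
    simpa using tendsto_const_nhds.sub h0
  exact hlim.congr' (eventually_atTop.2 ⟨m, fun n hn => (hpartial n hn).symm⟩)

lemma le_tsum_ite_le_of_sub_succ_le (hf : Summable f) (hg : ∀ k, m ≤ k → g (k + 1) ≤ g k)
    (h0 : Tendsto g atTop (𝓝 0)) (h : ∀ k, m ≤ k → g k - g (k + 1) ≤ f k) :
    g m ≤ ∑' k, if m ≤ k then f k else 0 := by
  refine hasSum_le (fun k => ?_) (hasSum_ite_le_sub_succ hg h0) (hf.ite_le m).hasSum
  split_ifs with hk
  exacts [h k hk, le_rfl]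

lemma tsum_ite_le_le_of_le_sub_succ (hf : Summable f) (hf0 : ∀ k, m ≤ k → 0 ≤ f k)
    (h0 : Tendsto g atTop (𝓝 0)) (h : ∀ k, m ≤ k → f k ≤ g k - g (k + 1)) :
    ∑' k, (if m ≤ k then f k else 0) ≤ g m := by
  have hg : ∀ k, m ≤ k → g (k + 1) ≤ g k := fun k hk => by linarith [hf0 k hk, h k hk]
  refine hasSum_le (fun k => ?_) (hf.ite_le m).hasSum (hasSum_ite_le_sub_succ hg h0)
  split_ifs with hk
  exacts [h k hk, le_rfl]

end Telescoping

noncomputable def powTail (s : ℝ) (m : ℕ) : ℝ :=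
  ∑' k : ℕ, if m ≤ k then (k : ℝ) ^ (-s - 1) else 0

section PowTail

variable {s : ℝ}

lemma summable_nat_rpow_neg_sub_one (hs : 0 < s) : Summable fun k : ℕ => (k : ℝ) ^ (-s - 1) :=
  Real.summable_nat_rpow.2 (by linarith)

lemma tendsto_rpow_neg_div_atTop (hs : 0 < s) :
    Tendsto (fun x : ℝ => x ^ (-s) / s) atTop (𝓝 0) := by
  simpa using (tendsto_rpow_neg_atTop hs).div_const s

lemma rpow_neg_div_le_powTail (hs : 0 < s) {m : ℕ} (hm : 1 ≤ m) :
    (m : ℝ) ^ (-s) / s ≤ powTail s m := by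
  have hpos : ∀ k : ℕ, m ≤ k → (0 : ℝ) < k := fun k hk => by
    exact_mod_cast hm.trans hk
  refine le_tsum_ite_le_of_sub_succ_le (g := fun k : ℕ => (k : ℝ) ^ (-s) / s)
    (summable_nat_rpow_neg_sub_one hs) (fun k hk => ?_)
    ((tendsto_rpow_neg_div_atTop hs).comp tendsto_natCast_atTop_atTop) (fun k hk => ?_)
  · show ((k + 1 : ℕ) : ℝ) ^ (-s) / s ≤ (k : ℝ) ^ (-s) / s
    gcongr ?_ / s
    exact Real.rpow_le_rpow_of_nonpos (hpos k hk) (by push_cast; linarith) (by linarith)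
  · have := (rpow_neg_sub_rpow_neg_mem_Icc hs (hpos k hk) (le_add_of_nonneg_right zero_le_one)).2
    push_cast
    rw [← sub_div, div_le_iff₀ hs]
    linarith

lemma powTail_le_sub_one_rpow_neg_div (hs : 0 < s) {m : ℕ} (hm : 2 ≤ m) :
    powTail s m ≤ ((m : ℝ) - 1) ^ (-s) / s := by
  have hpos : ∀ k : ℕ, m ≤ k → (0 : ℝ) < k - 1 := fun k hk => by
    have : (2 : ℝ) ≤ k := by exact_mod_cast hm.trans hk
    linarith
  refine tsum_ite_le_le_of_le_sub_succ (g := fun k : ℕ => ((k : ℝ) - 1) ^ (-s) / s)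
    (summable_nat_rpow_neg_sub_one hs) (fun k _ => by positivity)
    ((tendsto_rpow_neg_div_atTop hs).comp
      (tendsto_atTop_add_const_right _ (-1) tendsto_natCast_atTop_atTop)) (fun k hk => ?_)
  have := (rpow_neg_sub_rpow_neg_mem_Icc hs (hpos k hk) (sub_le_self _ zero_le_one)).1
  push_cast
  rw [add_sub_cancel_right, ← sub_div, le_div_iff₀ hs]
  linarith

lemma one_add_inv_rpow_neg_div_le_rpow_mul_powTail {x : ℝ} (hs : 0 < s) (hx : 0 < x) :
    (1 + x⁻¹) ^ (-s) / s ≤ x ^ s * powTail s (⌊x⌋₊ + 1) := by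
  have hm : ((⌊x⌋₊ + 1 : ℕ) : ℝ) ≤ x + 1 := by
    push_cast
    linarith [Nat.floor_le hx.le]
  calc (1 + x⁻¹) ^ (-s) / s = x ^ s * ((x * (1 + x⁻¹)) ^ (-s) / s) := by
        rw [← mul_div_assoc, rpow_mul_mul_rpow_neg hx (by positivity)]
    _ = x ^ s * ((x + 1) ^ (-s) / s) := by field_simp
    _ ≤ x ^ s * (((⌊x⌋₊ + 1 : ℕ) : ℝ) ^ (-s) / s) := by
        gcongr ?_ * (?_ / s)
        exact Real.rpow_le_rpow_of_nonpos (by positivity) hm (by linarith)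
    _ ≤ x ^ s * powTail s (⌊x⌋₊ + 1) := by
        gcongr
        exact rpow_neg_div_le_powTail hs le_add_self

lemma rpow_mul_powTail_le_one_sub_inv_rpow_neg_div {x : ℝ} (hs : 0 < s) (hx : 2 ≤ x) :
    x ^ s * powTail s (⌊x⌋₊ + 1) ≤ (1 - x⁻¹) ^ (-s) / s := by
  have hx0 : 0 < x := by linarith
  have hfloor : x - 1 < ⌊x⌋₊ := Nat.sub_one_lt_floor x
  have h1 : 1 ≤ ⌊x⌋₊ := Nat.le_floor (by push_cast; linarith)
  calc x ^ s * powTail s (⌊x⌋₊ + 1) ≤ x ^ s * ((⌊x⌋₊ : ℝ) ^ (-s) / s) := by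
        gcongr
        simpa using powTail_le_sub_one_rpow_neg_div hs (m := ⌊x⌋₊ + 1) (by omega)
    _ ≤ x ^ s * ((x - 1) ^ (-s) / s) := by
        gcongr ?_ * (?_ / s)
        exact Real.rpow_le_rpow_of_nonpos (by linarith) hfloor.le (by linarith)
    _ = x ^ s * ((x * (1 - x⁻¹)) ^ (-s) / s) := by
        congr 3
        field_simp
    _ = (1 - x⁻¹) ^ (-s) / s := by
        have : x⁻¹ ≤ 1 := inv_le_one_of_one_le₀ (by linarith)
        rw [← mul_div_assoc, rpow_mul_mul_rpow_neg hx0 (by linarith)]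

theorem tendsto_rpow_mul_powTail_floor_add_one (hs : 0 < s) :
    Tendsto (fun x : ℝ => x ^ s * powTail s (⌊x⌋₊ + 1)) atTop (𝓝 (1 / s)) := by
  have hφ : Tendsto (fun t : ℝ => (1 + t) ^ (-s) / s) (𝓝 0) (𝓝 (1 / s)) := by
    have h1 : Tendsto (fun t : ℝ => 1 + t) (𝓝 0) (𝓝 1) := by
      simpa using (continuous_const_add (1 : ℝ)).tendsto 0
    simpa using
      ((Real.continuousAt_rpow_const 1 (-s) (Or.inl one_ne_zero)).tendsto.comp h1).div_const s
  have hinv : Tendsto (fun x : ℝ => x⁻¹) atTop (𝓝 0) := tendsto_inv_atTop_zero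
  refine tendsto_of_tendsto_of_tendsto_of_le_of_le' (hφ.comp hinv)
    (by simpa [← sub_eq_add_neg] using hφ.comp (by simpa using hinv.neg)) ?_ ?_
  · filter_upwards [eventually_gt_atTop 0] with x hx
    exact one_add_inv_rpow_neg_div_le_rpow_mul_powTail hs hx
  · filter_upwards [eventually_ge_atTop 2] with x hx
    exact rpow_mul_powTail_le_one_sub_inv_rpow_neg_div hs hx

end PowTail

/-- **Key deterministic asymptotics in the Fréchet case.**
For `d ≥ 1`, `α ∈ (d,∞)` and `r > 0`, with `c_n = n^(d/(α-d))`,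
`n^d ∑_{k = ⌊c_n r⌋ + 1}^∞ k^(d-α-1) → r^(d-α)/(α-d)` as `n → ∞`. -/
theorem tail_sum_asymptotics
    (d : ℕ) (hd : 1 ≤ d) (α : ℝ) (hα : (d : ℝ) < α) (r : ℝ) (hr : 0 < r) :
    Tendsto
      (fun n : ℕ => (n : ℝ) ^ d *
        ∑' k : ℕ, if ⌊(n : ℝ) ^ ((d : ℝ) / (α - d)) * r⌋₊ + 1 ≤ k
          then (k : ℝ) ^ ((d : ℝ) - α - 1) else 0)
      atTop (nhds (r ^ ((d : ℝ) - α) / (α - d))) := by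
  have hs : 0 < α - d := sub_pos.2 hα
  have hc : Tendsto (fun n : ℕ => (n : ℝ) ^ ((d : ℝ) / (α - d)) * r) atTop atTop :=
    ((tendsto_rpow_atTop (div_pos (by exact_mod_cast hd) hs)).comp
      tendsto_natCast_atTop_atTop).atTop_mul_const hr
  have hlim := ((tendsto_rpow_mul_powTail_floor_add_one hs).comp hc).const_mul (r ^ (-(α - d)))
  rw [mul_one_div] at hlim
  rw [show (d : ℝ) - α - 1 = -(α - d) - 1 by ring, show (d : ℝ) - α = -(α - d) by ring]
  refine hlim.congr fun n => ?_
  rw [Function.comp_apply, Real.mul_rpow (by positivity) hr.le, ← Real.rpow_mul (Nat.cast_nonneg n),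
    div_mul_cancel₀ _ hs.ne', Real.rpow_natCast, Real.rpow_neg hr.le, powTail]
  field_simp
end

section
/- Let d ≥ 1, ρ > 0 and α ∈ (d, ∞), and let g : ℝ^d → [0,1] be given by g(z) = 1 − exp(−‖z‖^{−α}), where ‖·‖ is the Euclidean norm on ℝ^d. Set c_n = n^{d/(α−d)} and b_n = 0. Then there exists a constant C > 0, depending only on ρ, d and α, such that for every r > 0, lim_{n→∞} n^d · ρ ∫_{{z ∈ ℝ^d : ‖z‖ > c_n r}} g(z) dz = C·r^{d−α}. -/
/-!
In polar coordinates the tail integral is `d·|B₁| ∫_R^∞ y^(d-1) (1 - exp (-y^(-α))) dy`.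
Substituting `y = R u` turns `R^(α-d)` times this into
`∫_1^∞ u^(d-1) R^α (1 - exp (-(R u)^(-α))) du`, whose integrand tends to `u^(d-1-α)` by
`1 - exp (-x) ~ x` and is dominated by it since `1 - exp (-x) ≤ x`; dominated convergence gives
the limit `1/(α-d)`. With `R = n^(d/(α-d)) r` one has `n^d = r^(d-α) R^(α-d)`, which yields the
claim with `C = ρ d |B₁| / (α-d)`.
-/

open Filter MeasureTheory Metric Module Set Real Topology

lemma tendsto_one_sub_exp_neg_div_self :
    Tendsto (fun t : ℝ => (1 - exp (-t)) / t) (𝓝[≠] 0) (𝓝 1) := by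
  have h : HasDerivAt (fun t : ℝ => 1 - exp (-t)) 1 0 := by
    simpa using ((hasDerivAt_neg' (0 : ℝ)).exp).const_sub 1
  simpa [slope_fun_def_field] using h.tendsto_slope

lemma tendsto_rpow_mul_one_sub_exp_neg_rpow_neg {α : ℝ} (hα : 0 < α) :
    Tendsto (fun y : ℝ => y ^ α * (1 - exp (-y ^ (-α)))) atTop (𝓝 1) := by
  have ht : Tendsto (fun y : ℝ => y ^ (-α)) atTop (𝓝[≠] 0) :=
    tendsto_nhdsWithin_iff.2 ⟨tendsto_rpow_neg_atTop hα,
      (eventually_gt_atTop 0).mono fun y hy => (rpow_pos_of_pos hy _).ne'⟩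
  refine (tendsto_one_sub_exp_neg_div_self.comp ht).congr' ?_
  filter_upwards [eventually_gt_atTop 0] with y hy
  simp [rpow_neg hy.le, div_eq_mul_inv, mul_comm]

lemma one_sub_exp_neg_mem_Icc {x : ℝ} (hx : 0 ≤ x) : 1 - exp (-x) ∈ Icc 0 x :=
  ⟨sub_nonneg.2 (exp_le_one_iff.2 (neg_nonpos.2 hx)), by linarith [one_sub_le_exp_neg x]⟩

lemma rpow_sub_mul_integral_Ioi_eq (f : ℝ → ℝ) {s α R : ℝ} (hR : 0 < R) :
    R ^ (α - s) * ∫ y in Ioi R, y ^ (s - 1) * f y =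
      ∫ u in Ioi 1, u ^ (s - 1) * (R ^ α * f (R * u)) := by
  have h := integral_comp_mul_left_Ioi' (fun y => y ^ (s - 1) * f y) 1 hR
  rw [mul_one] at h
  rw [← h, smul_eq_mul, ← integral_const_mul, ← integral_const_mul]
  refine setIntegral_congr_fun measurableSet_Ioi fun u (hu : 1 < u) => ?_
  rw [mul_rpow hR.le (by linarith), rpow_sub hR, rpow_sub_one hR.ne']
  field_simp

lemma tendsto_integral_Ioi_one_rpow_mul_one_sub_exp {s α : ℝ} (hα : 0 < α) (hs : s < α) :
    Tendsto (fun R : ℝ => ∫ u in Ioi 1, u ^ (s - 1) * (R ^ α * (1 - exp (-(R * u) ^ (-α)))))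
      atTop (𝓝 (α - s)⁻¹) := by
  have hexp : s - 1 - α < -1 := by linarith
  have hvalue : ∫ u in Ioi (1 : ℝ), u ^ (s - 1 - α) = (α - s)⁻¹ := by
    rw [integral_Ioi_rpow_of_lt hexp one_pos, one_rpow, show s - 1 - α + 1 = -(α - s) by ring,
      div_neg, neg_div, neg_neg, one_div]
  rw [← hvalue]
  refine tendsto_integral_filter_of_dominated_convergence _ ?_ ?_
    (integrableOn_Ioi_rpow_of_lt hexp one_pos) ?_
  · exact .of_forall fun R => by fun_prop
  · filter_upwards [eventually_gt_atTop 0] with R hR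
    refine (ae_restrict_iff' measurableSet_Ioi).2 (.of_forall fun u (hu : 1 < u) => ?_)
    have hu0 : 0 < u := one_pos.trans hu
    obtain ⟨h0, h1⟩ := one_sub_exp_neg_mem_Icc (rpow_nonneg (mul_pos hR hu0).le (-α))
    have hbound : R ^ α * (1 - exp (-(R * u) ^ (-α))) ≤ u ^ (-α) := calc
      _ ≤ R ^ α * (R * u) ^ (-α) := mul_le_mul_of_nonneg_left h1 (by positivity)
      _ = u ^ (-α) := by
        rw [mul_rpow hR.le hu0.le, rpow_neg hR.le, ← mul_assoc,
          mul_inv_cancel₀ (rpow_pos_of_pos hR α).ne', one_mul]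
    rw [norm_of_nonneg (by positivity), sub_eq_add_neg (s - 1), rpow_add hu0]
    exact mul_le_mul_of_nonneg_left hbound (by positivity)
  · refine (ae_restrict_iff' measurableSet_Ioi).2 (.of_forall fun u (hu : 1 < u) => ?_)
    have hu0 : 0 < u := one_pos.trans hu
    have hRu : Tendsto (fun R : ℝ => R * u) atTop atTop := tendsto_id.atTop_mul_const hu0
    have hlimit := ((tendsto_rpow_mul_one_sub_exp_neg_rpow_neg hα).comp hRu).const_mul
      (u ^ (s - 1) * u ^ (-α))
    rw [mul_one, ← rpow_add hu0, ← sub_eq_add_neg] at hlimit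
    refine hlimit.congr' ?_
    filter_upwards [eventually_gt_atTop 0] with R hR
    simp only [Function.comp_apply, mul_rpow hR.le hu0.le, rpow_neg hu0.le]
    rw [rpow_sub hu0]
    field_simp

theorem tendsto_rpow_mul_integral_Ioi_one_sub_exp {s α : ℝ} (hα : 0 < α) (hs : s < α) :
    Tendsto (fun R : ℝ => R ^ (α - s) * ∫ y in Ioi R, y ^ (s - 1) * (1 - exp (-y ^ (-α))))
      atTop (𝓝 (α - s)⁻¹) := by
  refine (tendsto_integral_Ioi_one_rpow_mul_one_sub_exp hα hs).congr' ?_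
  filter_upwards [eventually_gt_atTop 0] with R hR
  exact (rpow_sub_mul_integral_Ioi_eq (fun y => 1 - exp (-y ^ (-α))) hR).symm

section Radial

variable {E : Type*} [NormedAddCommGroup E] [NormedSpace ℝ E] [MeasurableSpace E] [BorelSpace E]
  [FiniteDimensional ℝ E] [Nontrivial E] (μ : Measure E) [μ.IsAddHaarMeasure]

lemma setIntegral_lt_norm_eq (f : ℝ → ℝ) {R : ℝ} (hR : 0 ≤ R) :
    ∫ x in {x : E | R < ‖x‖}, f ‖x‖ ∂μ =
      finrank ℝ E * μ.real (ball 0 1) * ∫ y in Ioi R, y ^ ((finrank ℝ E : ℝ) - 1) * f y := by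
  have hset : MeasurableSet {x : E | R < ‖x‖} := measurableSet_lt measurable_const measurable_norm
  have hpow (y : ℝ) : y ^ (finrank ℝ E - 1) = y ^ ((finrank ℝ E : ℝ) - 1) := by
    rw [← Nat.cast_pred finrank_pos, rpow_natCast]
  rw [← integral_indicator hset]
  change ∫ x, (Ioi R).indicator f ‖x‖ ∂μ = _
  simp only [integral_fun_norm_addHaar μ, smul_eq_mul, hpow,
    ← fun y => indicator_mul_right (Ioi R) (fun y => y ^ ((finrank ℝ E : ℝ) - 1)) f (i := y)]
  rw [setIntegral_indicator measurableSet_Ioi, Ioi_inter_Ioi, max_eq_right hR, nsmul_eq_mul,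
    mul_assoc]

theorem tendsto_rpow_mul_setIntegral_lt_norm_one_sub_exp {α : ℝ} (hα : (finrank ℝ E : ℝ) < α) :
    Tendsto (fun R : ℝ => R ^ (α - finrank ℝ E) *
        ∫ x in {x : E | R < ‖x‖}, (1 - exp (-‖x‖ ^ (-α))) ∂μ)
      atTop (𝓝 (finrank ℝ E * μ.real (ball 0 1) / (α - finrank ℝ E))) := by
  have hα0 : 0 < α := (Nat.cast_nonneg _).trans_lt hα
  rw [div_eq_mul_inv]
  refine ((tendsto_rpow_mul_integral_Ioi_one_sub_exp hα0 hα).const_mul _).congr' ?_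
  filter_upwards [eventually_ge_atTop 0] with R hR
  rw [setIntegral_lt_norm_eq μ (fun y => 1 - exp (-y ^ (-α))) hR]
  ring

end Radial

/-- **Appendix Lemma, Fréchet case (F).**
For `g(z) = 1 - exp(-‖z‖^(-α))` on `ℝ^d` (Euclidean norm), `α ∈ (d,∞)`, `ρ > 0`, with
`c_n = n^(d/(α-d))` and `b_n = 0`, there is a constant `C > 0` depending only on `ρ`, `d`
and `α` such that for every `r > 0`,
`n^d · ρ ∫_{‖z‖ > c_n r} g(z) dz → C r^(d-α)` as `n → ∞`. -/
theorem tail_integral_frechet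
    (d : ℕ) (hd : 1 ≤ d) (ρ : ℝ) (hρ : 0 < ρ) (α : ℝ) (hα : (d : ℝ) < α) :
    ∃ C : ℝ, 0 < C ∧
      ∀ r : ℝ, 0 < r →
        Tendsto
          (fun n : ℕ => (n : ℝ) ^ d *
            (ρ * ∫ z in {z : EuclideanSpace ℝ (Fin d) | (n : ℝ) ^ ((d : ℝ) / (α - d)) * r + 0 < ‖z‖},
              (1 - Real.exp (-(‖z‖ ^ (-α))))))
          atTop (nhds (C * r ^ ((d : ℝ) - α))) := by
  have : Nontrivial (EuclideanSpace ℝ (Fin d)) :=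
    have : Nonempty (Fin d) := Fin.pos_iff_nonempty.1 hd
    inferInstance
  have hlim := tendsto_rpow_mul_setIntegral_lt_norm_one_sub_exp
    (volume : Measure (EuclideanSpace ℝ (Fin d))) (α := α) (by rwa [finrank_euclideanSpace_fin])
  rw [finrank_euclideanSpace_fin] at hlim
  have hball : 0 < volume.real (ball (0 : EuclideanSpace ℝ (Fin d)) 1) :=
    ENNReal.toReal_pos (measure_ball_pos volume 0 one_pos).ne' measure_ball_lt_top.ne
  have hαd : 0 < α - d := sub_pos.2 hα
  have hd0 : (0 : ℝ) < d := by exact_mod_cast hd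
  refine ⟨ρ * (d * volume.real (ball (0 : EuclideanSpace ℝ (Fin d)) 1) / (α - d)), by positivity,
    fun r hr => ?_⟩
  have hR : Tendsto (fun n : ℕ => (n : ℝ) ^ ((d : ℝ) / (α - d)) * r) atTop atTop :=
    ((tendsto_rpow_atTop (by positivity)).comp tendsto_natCast_atTop_atTop).atTop_mul_const hr
  rw [mul_right_comm]
  refine ((hlim.comp hR).const_mul (ρ * r ^ ((d : ℝ) - α))).congr' ?_
  filter_upwards with n
  have hscale :
      (n : ℝ) ^ d = r ^ ((d : ℝ) - α) * ((n : ℝ) ^ ((d : ℝ) / (α - d)) * r) ^ (α - d) := by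
    rw [mul_rpow (by positivity) hr.le, ← rpow_mul (Nat.cast_nonneg n), div_mul_cancel₀ _ hαd.ne',
      rpow_natCast, ← mul_assoc, mul_comm, ← mul_assoc, ← rpow_add hr]
    simp
  simp only [Function.comp_apply, add_zero, hscale]
  ring
end

section
/- Let d ≥ 1, ρ > 0 and λ ∈ (0, ∞), and let g : ℝ^d → [0,1] be given by g(z) = 1 − exp(−e^{−λ‖z‖}), where ‖·‖ is the Euclidean norm on ℝ^d. Then there exist sequences (c_n), (b_n) of real numbers and a constant C > 0, depending only on ρ, d and λ, such that for every r ∈ ℝ, lim_{n→∞} n^d · ρ ∫_{{z ∈ ℝ^d : ‖z‖ > c_n r + b_n}} g(z) dz = C·e^{−r}. -/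
/-!
In polar coordinates the tail integral is `d ω_d A(t)`, where `ω_d` is the volume of the unit ball
and `A(t) = ∫_t^∞ u^(d-1) g(u) du`.
Since `g(u) ~ e^(-λu)`, the radial density `φ(u) = u^(d-1) g(u)` satisfies
`φ(u + s) / φ(u) → e^(-λs)`, and by L'Hôpital's rule so does `A(t + s) / A(t)`. Taking `c_n = 1/λ`
and `b_n` with `A(b_n) = A(0) / n^d` (intermediate value theorem) gives
`n^d A(r/λ + b_n) = A(0) · A(b_n + r/λ) / A(b_n) → A(0) e^(-r)`.
-/

open Filter MeasureTheory Set Asymptotics Topology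

theorem StrictAntiOn.pos_of_tendsto_zero {A : ℝ → ℝ} {a t : ℝ} (hA : StrictAntiOn A (Ici a))
    (hlim : Tendsto A atTop (𝓝 0)) (ht : a ≤ t) : 0 < A t := by
  have hnonneg : 0 ≤ A (t + 1) :=
    le_of_tendsto hlim <| (eventually_ge_atTop (t + 1)).mono fun u hu =>
      hA.antitoneOn (show a ≤ t + 1 by linarith) (show a ≤ u by linarith) hu
  exact hnonneg.trans_lt (hA ht (show a ≤ t + 1 by linarith) (lt_add_one t))

theorem StrictAntiOn.exists_tendsto_atTop_eventually_eq {ι : Type*} {A : ℝ → ℝ} {a : ℝ}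
    (hc : ContinuousOn A (Ici a)) (hA : StrictAntiOn A (Ici a)) (hlim : Tendsto A atTop (𝓝 0))
    {l : Filter ι} {y : ι → ℝ} (hy : Tendsto y l (𝓝 0)) (hyA : ∀ᶠ i in l, y i ∈ Ioc 0 (A a)) :
    ∃ b : ι → ℝ, Tendsto b l atTop ∧ ∀ᶠ i in l, A (b i) = y i := by
  have hsurj : Ioc 0 (A a) ⊆ A '' Ici a :=
    isPreconnected_Ici.intermediate_value_Ioc self_mem_Ici (le_principal_iff.mpr (Ici_mem_atTop a))
      hc hlim
  set b := fun i => Function.invFunOn A (Ici a) (y i)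
  have hb : ∀ᶠ i in l, b i ∈ Ici a ∧ A (b i) = y i := hyA.mono fun i hi =>
    ⟨Function.invFunOn_mem (hsurj hi), Function.invFunOn_eq (hsurj hi)⟩
  refine ⟨b, tendsto_atTop.mpr fun M => ?_, hb.mono fun _ => And.right⟩
  have hpos : 0 < A (max M a) := hA.pos_of_tendsto_zero hlim (le_max_right M a)
  filter_upwards [hb, hy.eventually (gt_mem_nhds hpos)] with i ⟨hbi, hAbi⟩ hyi
  by_contra! hlt
  have := hA.antitoneOn hbi (mem_Ici.mpr (le_max_right M a)) (hlt.le.trans (le_max_left M a))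
  linarith

theorem hasDerivAt_integral_Ioi {φ : ℝ → ℝ} (hc : Continuous φ) (hi : ∀ x, IntegrableOn φ (Ioi x))
    (t : ℝ) : HasDerivAt (fun t => ∫ u in Ioi t, φ u) (-φ t) t := by
  have h : (fun t => ∫ u in Ioi t, φ u) = fun t => (∫ u in Ioi 0, φ u) - ∫ u in (0)..t, φ u := by
    ext t
    rw [← intervalIntegral.integral_Ioi_sub_Ioi' (hi 0) (hi t)]
    ring
  rw [h]
  exact ((hc.integral_hasStrictDerivAt 0 t).hasDerivAt).const_sub _

theorem strictAntiOn_integral_Ioi {φ : ℝ → ℝ} {a : ℝ} (hc : Continuous φ)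
    (hi : ∀ x, IntegrableOn φ (Ioi x)) (hpos : ∀ u ∈ Ioi a, 0 < φ u) :
    StrictAntiOn (fun t => ∫ u in Ioi t, φ u) (Ici a) := by
  refine strictAntiOn_of_deriv_neg (convex_Ici a)
    (fun t _ => (hasDerivAt_integral_Ioi hc hi t).continuousAt.continuousWithinAt) fun t ht => ?_
  rw [interior_Ici] at ht
  rw [(hasDerivAt_integral_Ioi hc hi t).deriv]
  exact neg_neg_of_pos (hpos t ht)

theorem tendsto_integral_Ioi_add_div_integral_Ioi {φ : ℝ → ℝ} (hc : Continuous φ)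
    (hi : ∀ x, IntegrableOn φ (Ioi x)) (hne : ∀ᶠ u in atTop, φ u ≠ 0) {s L : ℝ}
    (h : Tendsto (fun u => φ (u + s) / φ u) atTop (𝓝 L)) :
    Tendsto (fun t => (∫ u in Ioi (t + s), φ u) / ∫ u in Ioi t, φ u) atTop (𝓝 L) := by
  refine HasDerivAt.lhopital_zero_atTop (f' := fun t => -φ (t + s)) (g' := fun t => -φ t)
    (.of_forall fun t => (hasDerivAt_integral_Ioi hc hi (t + s)).comp_add_const t s)
    (.of_forall (hasDerivAt_integral_Ioi hc hi)) (hne.mono fun _ => neg_ne_zero.mpr)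
    (tendsto_integral_Ioi_zero (tendsto_atTop_add_const_right _ s tendsto_id))
    (tendsto_integral_Ioi_zero tendsto_id) ?_
  simpa only [neg_div_neg_eq] using h

theorem exists_tendsto_natCast_pow_mul_integral_Ioi {φ : ℝ → ℝ} {a lam : ℝ} (hc : Continuous φ)
    (hi : ∀ x, IntegrableOn φ (Ioi x)) (hpos : ∀ u ∈ Ioi a, 0 < φ u) (hlam : lam ≠ 0)
    (hratio : ∀ s, Tendsto (fun u => φ (u + s) / φ u) atTop (𝓝 (Real.exp (-(lam * s)))))
    {d : ℕ} (hd : d ≠ 0) :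
    ∃ b : ℕ → ℝ, ∃ C > 0, Tendsto b atTop atTop ∧ ∀ r, Tendsto
      (fun n : ℕ => (n : ℝ) ^ d * ∫ u in Ioi (lam⁻¹ * r + b n), φ u) atTop
      (𝓝 (C * Real.exp (-r))) := by
  set A : ℝ → ℝ := fun t => ∫ u in Ioi t, φ u
  have hA := strictAntiOn_integral_Ioi hc hi hpos
  have hAlim : Tendsto A atTop (𝓝 0) := tendsto_integral_Ioi_zero tendsto_id
  have hAa : 0 < A a := hA.pos_of_tendsto_zero hAlim le_rfl
  obtain ⟨b, hb, hAb⟩ := hA.exists_tendsto_atTop_eventually_eq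
    (fun t _ => (hasDerivAt_integral_Ioi hc hi t).continuousAt.continuousWithinAt) hAlim
    (y := fun n : ℕ => A a / (n : ℝ) ^ d)
    (tendsto_const_nhds.div_atTop ((tendsto_pow_atTop hd).comp tendsto_natCast_atTop_atTop))
    ((eventually_ge_atTop 1).mono fun n hn =>
      ⟨by positivity, div_le_self hAa.le (one_le_pow₀ (by exact_mod_cast hn))⟩)
  refine ⟨b, A a, hAa, hb, fun r => ?_⟩
  have hAratio := (tendsto_integral_Ioi_add_div_integral_Ioi hc hi
    ((eventually_gt_atTop a).mono fun u hu => (hpos u hu).ne') (hratio (lam⁻¹ * r))).comp hb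
  rw [mul_inv_cancel_left₀ hlam] at hAratio
  refine (hAratio.const_mul (A a)).congr' ?_
  filter_upwards [hAb, eventually_ge_atTop 1] with n hAbn hn
  rw [Function.comp_apply, add_comm, hAbn]
  field_simp

theorem MeasureTheory.integral_setOf_lt_norm_addHaar {E F : Type*} [NormedAddCommGroup E]
    [NormedSpace ℝ E] [MeasurableSpace E] [BorelSpace E] [FiniteDimensional ℝ E] [Nontrivial E]
    [NormedAddCommGroup F] [NormedSpace ℝ F] (μ : Measure E) [μ.IsAddHaarMeasure]
    (f : ℝ → F) {t : ℝ} (ht : 0 ≤ t) :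
    ∫ x in {x : E | t < ‖x‖}, f ‖x‖ ∂μ = Module.finrank ℝ E • μ.real (Metric.ball 0 1) •
      ∫ y in Ioi t, y ^ (Module.finrank ℝ E - 1) • f y := by
  have hind : ∀ y : ℝ, y ^ (Module.finrank ℝ E - 1) • (Ioi t).indicator f y =
      (Ioi t).indicator (fun y => y ^ (Module.finrank ℝ E - 1) • f y) y := fun y =>
    ((Ioi t).indicator_const_smul_apply _ _ _).symm
  rw [← integral_indicator (measurableSet_lt measurable_const measurable_norm)]
  simp_rw [show ∀ x : E, {x : E | t < ‖x‖}.indicator (fun x => f ‖x‖) x =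
      (Ioi t).indicator f ‖x‖ from fun x => (Ioi t).indicator_comp_right (fun x : E => ‖x‖)]
  rw [integral_fun_norm_addHaar μ]
  simp_rw [hind, setIntegral_indicator measurableSet_Ioi, Ioi_inter_Ioi, max_eq_right ht]

noncomputable def gumbelProfile (lam u : ℝ) : ℝ := 1 - Real.exp (-Real.exp (-lam * u))

theorem isEquivalent_one_sub_exp_neg : (fun x : ℝ => 1 - Real.exp (-x)) ~[𝓝 0] id := by
  have h : HasDerivAt (fun x : ℝ => 1 - Real.exp (-x)) 1 0 := by
    simpa using ((Real.hasDerivAt_exp _).comp (0 : ℝ) (hasDerivAt_neg (0 : ℝ))).const_sub 1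
  simpa using! h.isLittleO

section Gumbel

variable {lam : ℝ}

theorem continuous_gumbelProfile : Continuous (gumbelProfile lam) := by
  unfold gumbelProfile; fun_prop

theorem gumbelProfile_pos (u : ℝ) : 0 < gumbelProfile lam u :=
  sub_pos.mpr (Real.exp_lt_one_iff.mpr (neg_neg_iff_pos.mpr (Real.exp_pos _)))

theorem isEquivalent_gumbelProfile (hlam : 0 < lam) :
    gumbelProfile lam ~[atTop] fun u => Real.exp (-lam * u) := by
  have h : Tendsto (fun u => Real.exp (-lam * u)) atTop (𝓝 0) :=
    Real.tendsto_exp_atBot.comp (tendsto_id.const_mul_atTop_of_neg (neg_lt_zero.mpr hlam))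
  exact isEquivalent_one_sub_exp_neg.comp_tendsto h

variable {k : ℕ}

theorem isBigO_pow_mul_gumbelProfile (hlam : 0 < lam) :
    (fun u => u ^ k * gumbelProfile lam u) =O[atTop] fun u => Real.exp (-(lam / 2) * u) := by
  have h := ((isLittleO_pow_exp_pos_mul_atTop k (half_pos hlam)).isBigO.mul
    (isEquivalent_gumbelProfile hlam).isBigO)
  refine h.congr_right fun u => ?_
  rw [← Real.exp_add]
  ring_nf

theorem integrableOn_pow_mul_gumbelProfile (hlam : 0 < lam) (a : ℝ) :
    IntegrableOn (fun u => u ^ k * gumbelProfile lam u) (Ioi a) :=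
  integrable_of_isBigO_exp_neg (half_pos hlam)
    ((continuous_pow k).mul continuous_gumbelProfile).continuousOn
    (isBigO_pow_mul_gumbelProfile hlam)

theorem tendsto_pow_mul_gumbelProfile_add_div (hlam : 0 < lam) (s : ℝ) :
    Tendsto (fun u => (u + s) ^ k * gumbelProfile lam (u + s) / (u ^ k * gumbelProfile lam u))
      atTop (𝓝 (Real.exp (-(lam * s)))) := by
  have hG := isEquivalent_gumbelProfile hlam
  have hshift : (fun u : ℝ => u + s) ~[atTop] id :=
    (IsEquivalent.refl (u := id)).add_isLittleO (isLittleO_const_id_atTop s)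
  have hnum := (hshift.pow k).mul (hG.comp_tendsto (tendsto_atTop_add_const_right _ s tendsto_id))
  have hratio := hnum.div ((IsEquivalent.refl (u := fun u : ℝ => u ^ k)).mul hG)
  refine (hratio.congr_right ?_).symm.tendsto_nhds tendsto_const_nhds
  filter_upwards [eventually_gt_atTop 0] with u hu
  have : Real.exp (-lam * (u + s)) = Real.exp (-lam * u) * Real.exp (-(lam * s)) := by
    rw [← Real.exp_add]; ring_nf
  simp only [Pi.div_apply, Pi.mul_apply, Pi.pow_apply, id, Function.comp, this]
  field_simp

end Gumbel

theorem integral_setOf_lt_norm_gumbelProfile {d : ℕ} (hd : 1 ≤ d) (lam : ℝ) {t : ℝ} (ht : 0 ≤ t) :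
    ∫ z in {z : EuclideanSpace ℝ (Fin d) | t < ‖z‖}, gumbelProfile lam ‖z‖ =
      d * volume.real (Metric.ball (0 : EuclideanSpace ℝ (Fin d)) 1) *
        ∫ u in Ioi t, u ^ (d - 1) * gumbelProfile lam u := by
  have : Nontrivial (EuclideanSpace ℝ (Fin d)) :=
    Module.nontrivial_of_finrank_pos (R := ℝ) (by rw [finrank_euclideanSpace_fin]; omega)
  rw [integral_setOf_lt_norm_addHaar volume _ ht, finrank_euclideanSpace_fin, nsmul_eq_mul,
    smul_eq_mul, mul_assoc]
  rfl

/-- **Appendix Lemma, Gumbel case (G1).**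
For `g(z) = 1 - exp(-e^(-λ‖z‖))` on `ℝ^d` (Euclidean norm), `λ > 0`, `ρ > 0`, there exist
sequences `(c_n)`, `(b_n)` and a constant `C > 0` depending only on `ρ`, `d` and `λ` such
that for every `r ∈ ℝ`, `n^d · ρ ∫_{‖z‖ > c_n r + b_n} g(z) dz → C e^(-r)` as `n → ∞`. -/
theorem tail_integral_gumbel_one
    (d : ℕ) (hd : 1 ≤ d) (ρ : ℝ) (hρ : 0 < ρ) (lam : ℝ) (hlam : 0 < lam) :
    ∃ c b : ℕ → ℝ, ∃ C : ℝ, 0 < C ∧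
      ∀ r : ℝ,
        Tendsto
          (fun n : ℕ => (n : ℝ) ^ d *
            (ρ * ∫ z in {z : EuclideanSpace ℝ (Fin d) | c n * r + b n < ‖z‖},
              (1 - Real.exp (-Real.exp (-lam * ‖z‖)))))
          atTop (nhds (C * Real.exp (-r))) := by
  simp_rw [show ∀ u, 1 - Real.exp (-Real.exp (-lam * u)) = gumbelProfile lam u from fun _ => rfl]
  set φ : ℝ → ℝ := fun u => u ^ (d - 1) * gumbelProfile lam u
  set κ := d * volume.real (Metric.ball (0 : EuclideanSpace ℝ (Fin d)) 1)
  have hκ : 0 < κ := mul_pos (by exact_mod_cast hd)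
    (ENNReal.toReal_pos (Metric.measure_ball_pos volume 0 one_pos).ne' measure_ball_lt_top.ne)
  obtain ⟨b, C, hC, hb, hlim⟩ := exists_tendsto_natCast_pow_mul_integral_Ioi (φ := φ) (a := 0)
    ((continuous_pow _).mul continuous_gumbelProfile) (integrableOn_pow_mul_gumbelProfile hlam)
    (fun u hu => mul_pos (pow_pos hu _) (gumbelProfile_pos u)) hlam.ne'
    (tendsto_pow_mul_gumbelProfile_add_div hlam) (d := d) (by omega)
  refine ⟨fun _ => lam⁻¹, b, ρ * κ * C, by positivity, fun r => ?_⟩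
  rw [mul_assoc]
  refine ((hlim r).const_mul (ρ * κ)).congr' ?_
  filter_upwards [hb.eventually_ge_atTop (-(lam⁻¹ * r))] with n hn
  rw [integral_setOf_lt_norm_gumbelProfile hd lam (by linarith)]
  ring
end

section
/- Let d ≥ 1, ρ > 0 and M, α ∈ (0, ∞), and let g : ℝ^d → [0,1] be given by g(z) = M^{−α}(M − ‖z‖)^α·1{‖z‖ ≤ M}, where ‖·‖ is the Euclidean norm on ℝ^d. Set c_n = n^{−d/(α+1)} and b_n = M. Then there exists a constant C > 0, depending only on ρ, d and α, such that for every r ≤ 0, lim_{n→∞} n^d · ρ ∫_{{z ∈ ℝ^d : ‖z‖ > c_n r + M}} g(z) dz = C·(−r)^{α+1}. -/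
/-!
In polar coordinates the tail integral equals `d ω M^(-α) ∫_{s_n}^M y^(d-1) (M - y)^α dy`,
where `s_n = c_n r + M` and `ω` is the volume of the unit ball. On `[s_n, M]` the factor
`y^(d-1)` lies between `s_n^(d-1)` and `M^(d-1)`, while `∫_{s_n}^M (M - y)^α dy` is exactly
`(c_n (-r))^(α+1) / (α+1)`. Since `n^d c_n^(α+1) = 1` and `s_n → M`, the limit is `C (-r)^(α+1)`
with `C = ρ d ω M^(d-1-α) / (α+1)`.
-/

open Filter MeasureTheory Set Metric Topology

section Polar

variable {E : Type*} [NormedAddCommGroup E] [NormedSpace ℝ E] [Nontrivial E]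
  [FiniteDimensional ℝ E] [MeasurableSpace E] [BorelSpace E] (μ : Measure E) [μ.IsAddHaarMeasure]

theorem setIntegral_norm_gt_radial_eq_intervalIntegral {s M : ℝ} (hs : 0 ≤ s) (hsM : s ≤ M)
    (f : ℝ → ℝ) :
    ∫ z in {z : E | s < ‖z‖}, (if ‖z‖ ≤ M then f ‖z‖ else 0) ∂μ
      = Module.finrank ℝ E * μ.real (ball 0 1) *
          ∫ y in s..M, y ^ (Module.finrank ℝ E - 1) * f y := by
  have hshell : ∀ z : E, {z : E | s < ‖z‖}.indicator (fun z => if ‖z‖ ≤ M then f ‖z‖ else 0) z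
      = (Ioc s M).indicator f ‖z‖ := by
    intro z
    by_cases h : s < ‖z‖ <;> by_cases h' : ‖z‖ ≤ M <;> simp [indicator, h, h']
  rw [← integral_indicator (measurableSet_lt measurable_const measurable_norm),
    funext hshell, integral_fun_norm_addHaar μ (fun y => (Ioc s M).indicator f y),
    intervalIntegral.integral_of_le hsM, nsmul_eq_mul, smul_eq_mul, mul_assoc]
  have hradial : ∀ y : ℝ, y ^ (Module.finrank ℝ E - 1) • (Ioc s M).indicator f y
      = (Ioc s M).indicator (fun y => y ^ (Module.finrank ℝ E - 1) * f y) y :=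
    fun y => by by_cases hy : y ∈ Ioc s M <;> simp [hy]
  simp only [hradial, setIntegral_indicator measurableSet_Ioc]
  rw [inter_eq_right.mpr (Ioc_subset_Ioi_self.trans (Ioi_subset_Ioi hs))]

end Polar

section Profile

variable {α s M : ℝ}

theorem integral_sub_rpow (hα : -1 < α) :
    ∫ y in s..M, (M - y) ^ α = (M - s) ^ (α + 1) / (α + 1) := by
  rw [intervalIntegral.integral_comp_sub_left (fun x => x ^ α), sub_self,
    integral_rpow (Or.inl hα), Real.zero_rpow (by linarith), sub_zero]

theorem intervalIntegrable_sub_rpow (hα : -1 < α) :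
    IntervalIntegrable (fun y => (M - y) ^ α) volume s M := by
  simpa using (intervalIntegral.intervalIntegrable_rpow' hα (a := M - s) (b := 0)).comp_sub_left M

theorem integral_pow_mul_sub_rpow_mem_Icc (k : ℕ) (hα : -1 < α) (hs : 0 ≤ s) (hsM : s ≤ M) :
    ∫ y in s..M, y ^ k * (M - y) ^ α ∈
      Icc (s ^ k * ((M - s) ^ (α + 1) / (α + 1))) (M ^ k * ((M - s) ^ (α + 1) / (α + 1))) := by
  have hint := intervalIntegrable_sub_rpow (s := s) (M := M) hα
  rw [← integral_sub_rpow hα, ← intervalIntegral.integral_const_mul,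
    ← intervalIntegral.integral_const_mul]
  have hweight : ∀ y ∈ Icc s M, 0 ≤ (M - y) ^ α := fun y hy =>
    Real.rpow_nonneg (sub_nonneg.mpr hy.2) α
  constructor
  · refine intervalIntegral.integral_mono_on hsM (hint.const_mul _)
      (hint.continuousOn_mul (continuous_pow k).continuousOn) fun y hy => ?_
    exact mul_le_mul_of_nonneg_right (pow_le_pow_left₀ hs hy.1 k) (hweight y hy)
  · refine intervalIntegral.integral_mono_on hsM
      (hint.continuousOn_mul (continuous_pow k).continuousOn) (hint.const_mul _) fun y hy => ?_
    exact mul_le_mul_of_nonneg_right (pow_le_pow_left₀ (hs.trans hy.1) hy.2 k) (hweight y hy)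

end Profile

theorem tendsto_mul_integral_pow_mul_sub_rpow {ι : Type*} {l : Filter ι} {s w : ι → ℝ}
    {α M T : ℝ} (k : ℕ) (hα : -1 < α) (hs : Tendsto s l (𝓝 M)) (hs0 : ∀ᶠ i in l, 0 ≤ s i)
    (hsM : ∀ᶠ i in l, s i ≤ M) (hw0 : ∀ᶠ i in l, 0 ≤ w i)
    (hw : ∀ᶠ i in l, w i * (M - s i) ^ (α + 1) = T) :
    Tendsto (fun i => w i * ∫ y in s i..M, y ^ k * (M - y) ^ α) l
      (𝓝 (M ^ k * (T / (α + 1)))) := by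
  have hlower : Tendsto (fun i => s i ^ k * (T / (α + 1))) l (𝓝 (M ^ k * (T / (α + 1)))) :=
    (hs.pow k).mul_const _
  refine tendsto_of_tendsto_of_tendsto_of_le_of_le' hlower tendsto_const_nhds ?_ ?_
  · filter_upwards [hs0, hsM, hw0, hw] with i hs0 hsM hw0 hw
    calc s i ^ k * (T / (α + 1)) = w i * (s i ^ k * ((M - s i) ^ (α + 1) / (α + 1))) := by
          rw [← hw]; ring
      _ ≤ _ := mul_le_mul_of_nonneg_left (integral_pow_mul_sub_rpow_mem_Icc k hα hs0 hsM).1 hw0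
  · filter_upwards [hs0, hsM, hw0, hw] with i hs0 hsM hw0 hw
    calc w i * ∫ y in s i..M, y ^ k * (M - y) ^ α
        ≤ w i * (M ^ k * ((M - s i) ^ (α + 1) / (α + 1))) :=
          mul_le_mul_of_nonneg_left (integral_pow_mul_sub_rpow_mem_Icc k hα hs0 hsM).2 hw0
      _ = M ^ k * (T / (α + 1)) := by rw [← hw]; ring

theorem rpow_mul_rpow_neg_div_mul_rpow {x p : ℝ} (hx : 0 < x) (hp : p ≠ 0) (a : ℝ) {t : ℝ}
    (ht : 0 ≤ t) : x ^ a * (x ^ (-a / p) * t) ^ p = t ^ p := by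
  rw [Real.mul_rpow (by positivity) ht, ← Real.rpow_mul hx.le, div_mul_cancel₀ _ hp, ← mul_assoc,
    ← Real.rpow_add hx, add_neg_cancel, Real.rpow_zero, one_mul]

/-- **Appendix Lemma, Weibull case (W).**
For `g(z) = M^(-α)(M - ‖z‖)^α 1{‖z‖ ≤ M}` on `ℝ^d` (Euclidean norm), `M, α > 0`, `ρ > 0`,
with `c_n = n^(-d/(α+1))` and `b_n = M`, there is a constant `C > 0` depending only on
`ρ`, `d` and `α` such that for every `r ≤ 0`,
`n^d · ρ ∫_{‖z‖ > c_n r + M} g(z) dz → C (-r)^(α+1)` as `n → ∞`. -/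
theorem tail_integral_weibull
    (d : ℕ) (hd : 1 ≤ d) (ρ : ℝ) (hρ : 0 < ρ) (M α : ℝ) (hM : 0 < M) (hα : 0 < α) :
    ∃ C : ℝ, 0 < C ∧
      ∀ r : ℝ, r ≤ 0 →
        Tendsto
          (fun n : ℕ => (n : ℝ) ^ d *
            (ρ * ∫ z in {z : EuclideanSpace ℝ (Fin d) |
                (n : ℝ) ^ (-(d : ℝ) / (α + 1)) * r + M < ‖z‖},
              (if ‖z‖ ≤ M then M ^ (-α) * (M - ‖z‖) ^ α else 0)))
          atTop (nhds (C * (-r) ^ (α + 1))) := by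
  have : Nonempty (Fin d) := Fin.pos_iff_nonempty.mp hd
  set ω := volume.real (ball (0 : EuclideanSpace ℝ (Fin d)) 1)
  have hω : 0 < ω := ENNReal.toReal_pos (measure_ball_pos _ _ one_pos).ne' measure_ball_lt_top.ne
  refine ⟨ρ * (d * ω * M ^ (-α) * M ^ (d - 1) / (α + 1)), by positivity, fun r hr => ?_⟩
  set c : ℕ → ℝ := fun n => (n : ℝ) ^ (-(d : ℝ) / (α + 1))
  have hs : Tendsto (fun n => c n * r + M) atTop (𝓝 M) := by
    have hc := (tendsto_rpow_neg_atTop (by positivity : 0 < (d : ℝ) / (α + 1))).comp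
      tendsto_natCast_atTop_atTop
    simpa [c, neg_div, Function.comp_def] using (hc.mul_const r).add_const M
  have hsM : ∀ n, c n * r + M ≤ M := fun n =>
    add_le_of_nonpos_left (mul_nonpos_of_nonneg_of_nonpos (by positivity) hr)
  have hs0 : ∀ᶠ n in atTop, 0 ≤ c n * r + M := hs.eventually (eventually_ge_nhds hM)
  have hscale : ∀ᶠ n : ℕ in atTop,
      (n : ℝ) ^ d * (M - (c n * r + M)) ^ (α + 1) = (-r) ^ (α + 1) := by
    filter_upwards [eventually_gt_atTop 0] with n hn
    rw [show M - (c n * r + M) = c n * -r by ring, ← Real.rpow_natCast]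
    exact rpow_mul_rpow_neg_div_mul_rpow (by positivity) (by positivity) _ (by linarith)
  have hpolar : ∀ᶠ n : ℕ in atTop, ρ * d * ω * M ^ (-α) * ((n : ℝ) ^ d *
      ∫ y in c n * r + M..M, y ^ (d - 1) * (M - y) ^ α) = (n : ℝ) ^ d *
        (ρ * ∫ z in {z : EuclideanSpace ℝ (Fin d) | c n * r + M < ‖z‖},
          (if ‖z‖ ≤ M then M ^ (-α) * (M - ‖z‖) ^ α else 0)) := by
    filter_upwards [hs0] with n hn
    rw [setIntegral_norm_gt_radial_eq_intervalIntegral volume hn (hsM n)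
      (fun y => M ^ (-α) * (M - y) ^ α), finrank_euclideanSpace_fin]
    simp_rw [mul_left_comm (_ ^ (d - 1)) (M ^ (-α)), intervalIntegral.integral_const_mul]
    ring
  convert ((tendsto_mul_integral_pow_mul_sub_rpow (d - 1) (by linarith) hs hs0
    (.of_forall hsM) (.of_forall fun n => by positivity) hscale).const_mul
      (ρ * d * ω * M ^ (-α))).congr' hpolar using 2
  ring
end
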